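/- Partial minimization of a quadratic form with homogeneous equality constraints yields a quadratic form with homogeneous constraints and a linear minimizer: if f(x,u) = (1/2)[x;u]^T [[P_xx, P_xu],[P_ux, P_uu]][x;u] + I(F_x x + F_u u = 0) is convex, and for every feasible x the infimum over u is attained, then g(x) = inf_u f(x,u) is of the form (1/2) x^T P̂ x + I(F̂ x = 0) for some symmetric P̂ and matrix F̂, and there exists K ∈ R^{m×n} such that u = Kx attains the infimum for every x in the domain of g. -/

import Mathlib

open Matrix

/-- The quadratic form `(1/2)[x;u]ᵀ [[Pxx, Pxu], [Pxuᵀ, Puu]] [x;u]`. -/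
noncomputable def quadForm2 {n m : ℕ}
    (Pxx : Matrix (Fin n) (Fin n) ℝ) (Pxu : Matrix (Fin n) (Fin m) ℝ)
    (Puu : Matrix (Fin m) (Fin m) ℝ) (x : Fin n → ℝ) (u : Fin m → ℝ) : ℝ :=
  (1 / 2) * (x ⬝ᵥ Pxx.mulVec x + 2 * (x ⬝ᵥ Pxu.mulVec u) + u ⬝ᵥ Puu.mulVec u)

/-- The quadratic form plus the `0/+∞` indicator of the subspace `{(x,u) | Fₓx + Fᵤu = 0}`. -/
noncomputable def homExtQuad2 {n m p : ℕ}
    (Pxx : Matrix (Fin n) (Fin n) ℝ) (Pxu : Matrix (Fin n) (Fin m) ℝ)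
    (Puu : Matrix (Fin m) (Fin m) ℝ)
    (Fx : Matrix (Fin p) (Fin n) ℝ) (Fu : Matrix (Fin p) (Fin m) ℝ)
    (x : Fin n → ℝ) (u : Fin m → ℝ) : EReal :=
  if Fx.mulVec x + Fu.mulVec u = 0 then ((quadForm2 Pxx Pxu Puu x u : ℝ) : EReal) else ⊤

/-
For a quadratic map `Q` on `E × F` and a subspace `V`, the pairs `(x, u)` for which `u` minimizes
`Q (x, ·)` over the fiber `{u | (x, u) ∈ V}` form a linear subspace once every nonempty fiber has a
minimizer. It is closed under scaling by homogeneity; it contains `0` because the minimum `μ` over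
the fiber of `0` satisfies `μ ≤ Q 0 = 0` and `μ ≤ 4μ`; and it is closed under sums by the
parallelogram law, which bounds the sum of the fiber minima at `x + y` and `x - y` from below by
`2 Q (x, u) + 2 Q (y, v) = Q (x + y, u + v) + Q (x - y, u - v)`, so `u + v` is a minimizer. A linear section `x ↦ (x, K x)` of this subspace over the feasible
`x` is the linear minimizer; the value function is the quadratic form `x ↦ Q (x, K x)` on the
feasible set, which is a subspace and hence the kernel of a matrix.
-/

theorem QuadraticMap.map_add_add_map_sub {R M N : Type*} [CommRing R] [AddCommGroup M]
    [Module R M] [AddCommGroup N] [Module R N] (Q : QuadraticMap R M N) (x y : M) :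
    Q (x + y) + Q (x - y) = 2 • Q x + 2 • Q y := by
  have h := QuadraticMap.polar_neg_right Q x y
  simp only [QuadraticMap.polar, ← sub_eq_add_neg, QuadraticMap.map_neg] at h
  rw [two_smul, two_smul, ← sub_eq_zero, ← sub_eq_zero.2 h]
  abel

theorem Submodule.exists_linearMap_prodMk_mem {K E F : Type*} [DivisionRing K]
    [AddCommGroup E] [Module K E] [AddCommGroup F] [Module K F] (M : Submodule K (E × F)) :
    ∃ f : E →ₗ[K] F, ∀ x ∈ M.map (LinearMap.fst K E F), (x, f x) ∈ M := by
  obtain ⟨s, hs⟩ := ((LinearMap.fst K E F).submoduleMap M).exists_rightInverse_of_surjective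
    (LinearMap.range_eq_top.2 ((LinearMap.fst K E F).submoduleMap_surjective M))
  obtain ⟨f, hf⟩ := (LinearMap.snd K E F ∘ₗ M.subtype ∘ₗ s).exists_extend
  refine ⟨f, fun x hx => ?_⟩
  have hfst : (s ⟨x, hx⟩ : E × F).1 = x := congrArg Subtype.val (LinearMap.congr_fun hs ⟨x, hx⟩)
  have hsnd : f x = (s ⟨x, hx⟩ : E × F).2 := LinearMap.congr_fun hf ⟨x, hx⟩
  have hmem := (s ⟨x, hx⟩).2
  rwa [← Prod.mk.eta (p := (s ⟨x, hx⟩ : E × F)), hfst, ← hsnd] at hmem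

section FiberMinimizers

variable {𝕜 E F : Type*} [Field 𝕜] [LinearOrder 𝕜] [IsStrictOrderedRing 𝕜]
  [AddCommGroup E] [Module 𝕜 E] [AddCommGroup F] [Module 𝕜 F]
  (Q : QuadraticMap 𝕜 (E × F) 𝕜) (V : Submodule 𝕜 (E × F))

def IsFiberMin (p : E × F) : Prop :=
  p ∈ V ∧ ∀ u, (p.1, u) ∈ V → Q p ≤ Q (p.1, u)

variable {Q V}

theorem isFiberMin_zero (hattain : ∀ x, (∃ u, (x, u) ∈ V) → ∃ u, IsFiberMin Q V (x, u)) :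
    IsFiberMin Q V 0 := by
  obtain ⟨u, hu, hmin⟩ := hattain 0 ⟨0, V.zero_mem⟩
  have hle_zero : Q (0, u) ≤ 0 := (hmin 0 V.zero_mem).trans_eq Q.map_zero
  -- doubling `u` multiplies `Q (0, u)` by four, so the minimum cannot be negative
  have hle_four : Q (0, u) ≤ 4 * Q (0, u) := by
    have h2u : Q (0, u) ≤ Q (0, (2 : 𝕜) • u) := hmin _ (by simpa using V.smul_mem (2 : 𝕜) hu)
    have hdouble : ((0 : E), (2 : 𝕜) • u) = (2 : 𝕜) • ((0 : E), u) := by simp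
    rw [hdouble, QuadraticMap.map_smul, smul_eq_mul] at h2u
    linarith
  refine ⟨V.zero_mem, fun u' hu' => ?_⟩
  calc Q 0 = 0 := Q.map_zero
    _ ≤ Q (0, u) := by linarith
    _ ≤ Q (0, u') := hmin u' hu'

theorem IsFiberMin.smul (hattain : ∀ x, (∃ u, (x, u) ∈ V) → ∃ u, IsFiberMin Q V (x, u))
    {p : E × F} (hp : IsFiberMin Q V p) (c : 𝕜) : IsFiberMin Q V (c • p) := by
  rcases eq_or_ne c 0 with rfl | hc
  · simpa using isFiberMin_zero hattain
  refine ⟨V.smul_mem c hp.1, fun u hu => ?_⟩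
  have hu' : (p.1, c⁻¹ • u) ∈ V := by
    simpa [smul_smul, hc] using V.smul_mem c⁻¹ hu
  have hcu : (c • p.1, u) = c • (p.1, c⁻¹ • u) := by simp [smul_smul, hc]
  rw [Prod.smul_fst, hcu, QuadraticMap.map_smul, QuadraticMap.map_smul, smul_eq_mul, smul_eq_mul]
  exact mul_le_mul_of_nonneg_left (hp.2 _ hu') (mul_self_nonneg c)

theorem IsFiberMin.add (hattain : ∀ x, (∃ u, (x, u) ∈ V) → ∃ u, IsFiberMin Q V (x, u))
    {p q : E × F} (hp : IsFiberMin Q V p) (hq : IsFiberMin Q V q) :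
    IsFiberMin Q V (p + q) := by
  obtain ⟨w, hw, hwmin⟩ := hattain (p + q).1 ⟨_, V.add_mem hp.1 hq.1⟩
  obtain ⟨z, hz, hzmin⟩ := hattain (p - q).1 ⟨_, V.sub_mem hp.1 hq.1⟩
  -- `a ± b` are the fiber minimizers over `(p ± q).1`; compare both parallelogram identities
  set a : E × F := (p.1, (2 : 𝕜)⁻¹ • (w + z))
  set b : E × F := (q.1, (2 : 𝕜)⁻¹ • (w - z))
  have hab : a + b = ((p + q).1, w) ∧ a - b = ((p - q).1, z) := by
    constructor <;> ext <;> simp [a, b] <;> module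
  have ha : a ∈ V := by
    have := V.smul_mem (2 : 𝕜)⁻¹ (V.add_mem hw hz)
    convert this using 1
    ext <;> simp [a]
    module
  have hb : b ∈ V := by
    have := V.smul_mem (2 : 𝕜)⁻¹ (V.sub_mem hw hz)
    convert this using 1
    ext <;> simp [b]
    module
  have hpar_pq := Q.map_add_add_map_sub p q
  have hpar_ab := Q.map_add_add_map_sub a b
  rw [hab.1, hab.2] at hpar_ab
  have ha_ge : Q p ≤ Q a := hp.2 _ ha
  have hb_ge : Q q ≤ Q b := hq.2 _ hb
  have hw_le : Q ((p + q).1, w) ≤ Q (p + q) := hwmin _ (V.add_mem hp.1 hq.1)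
  have hz_le : Q ((p - q).1, z) ≤ Q (p - q) := hzmin _ (V.sub_mem hp.1 hq.1)
  simp only [two_smul] at hpar_pq hpar_ab
  refine ⟨V.add_mem hp.1 hq.1, fun u hu => ?_⟩
  linarith [hwmin u hu]

theorem exists_linearMap_isFiberMin
    (hattain : ∀ x, (∃ u, (x, u) ∈ V) → ∃ u, IsFiberMin Q V (x, u)) :
    ∃ k : E →ₗ[𝕜] F, ∀ x, (∃ u, (x, u) ∈ V) → IsFiberMin Q V (x, k x) := by
  let M : Submodule 𝕜 (E × F) :=
    { carrier := {p | IsFiberMin Q V p}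
      add_mem' := IsFiberMin.add hattain
      zero_mem' := isFiberMin_zero hattain
      smul_mem' := fun c _ hp => hp.smul hattain c }
  obtain ⟨k, hk⟩ := M.exists_linearMap_prodMk_mem
  refine ⟨k, fun x hx => hk x ?_⟩
  obtain ⟨u, hu⟩ := hattain x hx
  exact ⟨(x, u), hu, rfl⟩

end FiberMinimizers

theorem QuadraticForm.dotProduct_toMatrix'_mulVec {R ι : Type*} [CommRing R] [Invertible (2 : R)]
    [Fintype ι] [DecidableEq ι] (Q : QuadraticForm R (ι → R)) (x : ι → R) :
    x ⬝ᵥ Q.toMatrix' *ᵥ x = Q x := by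
  rw [← Matrix.toLinearMap₂'_apply', QuadraticForm.toMatrix', Matrix.toLinearMap₂'_toMatrix']
  exact QuadraticMap.associated_eq_self_apply R Q x

theorem Submodule.exists_matrix_mulVec_eq_zero_iff {K ι : Type*} [Field K] [Fintype ι]
    [DecidableEq ι] (S : Submodule K (ι → K)) :
    ∃ A : Matrix ι ι K, ∀ x, A *ᵥ x = 0 ↔ x ∈ S := by
  obtain ⟨T, hST⟩ := S.exists_isCompl
  refine ⟨LinearMap.toMatrix' (T.projection S hST.symm), fun x => ?_⟩
  rw [LinearMap.toMatrix'_mulVec, Submodule.projection_apply_eq_zero_iff]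

section HomogeneousQuadratic

variable {n m p : ℕ}

noncomputable def quadForm2Map (Pxx : Matrix (Fin n) (Fin n) ℝ) (Pxu : Matrix (Fin n) (Fin m) ℝ)
    (Puu : Matrix (Fin m) (Fin m) ℝ) : QuadraticMap ℝ ((Fin n → ℝ) × (Fin m → ℝ)) ℝ :=
  (1 / 2 : ℝ) • LinearMap.BilinMap.toQuadraticMap
    ((toLinearMap₂' ℝ Pxx).compl₁₂ (LinearMap.fst ℝ _ _) (LinearMap.fst ℝ _ _) +
      (2 : ℝ) • (toLinearMap₂' ℝ Pxu).compl₁₂ (LinearMap.fst ℝ _ _) (LinearMap.snd ℝ _ _) +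
      (toLinearMap₂' ℝ Puu).compl₁₂ (LinearMap.snd ℝ _ _) (LinearMap.snd ℝ _ _))

@[simp]
theorem quadForm2Map_apply (Pxx : Matrix (Fin n) (Fin n) ℝ) (Pxu : Matrix (Fin n) (Fin m) ℝ)
    (Puu : Matrix (Fin m) (Fin m) ℝ) (p : (Fin n → ℝ) × (Fin m → ℝ)) :
    quadForm2Map Pxx Pxu Puu p = quadForm2 Pxx Pxu Puu p.1 p.2 := by
  simp only [quadForm2Map, one_div, LinearMap.BilinMap.toQuadraticMap_add,
    LinearMap.BilinMap.toQuadraticMap_smul, _root_.smul_apply, _root_.add_apply,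
    LinearMap.BilinMap.toQuadraticMap_apply, LinearMap.compl₁₂_apply, LinearMap.fst_apply,
    LinearMap.snd_apply, toLinearMap₂'_apply', smul_eq_mul, quadForm2]

def homConstraint (Fx : Matrix (Fin p) (Fin n) ℝ) (Fu : Matrix (Fin p) (Fin m) ℝ) :
    Submodule ℝ ((Fin n → ℝ) × (Fin m → ℝ)) :=
  LinearMap.ker ((toLin' Fx).coprod (toLin' Fu))

@[simp]
theorem mem_homConstraint (Fx : Matrix (Fin p) (Fin n) ℝ) (Fu : Matrix (Fin p) (Fin m) ℝ)
    (v : (Fin n → ℝ) × (Fin m → ℝ)) :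
    v ∈ homConstraint Fx Fu ↔ Fx *ᵥ v.1 + Fu *ᵥ v.2 = 0 := by
  simp [homConstraint]

variable {Pxx : Matrix (Fin n) (Fin n) ℝ} {Pxu : Matrix (Fin n) (Fin m) ℝ}
  {Puu : Matrix (Fin m) (Fin m) ℝ} {Fx : Matrix (Fin p) (Fin n) ℝ} {Fu : Matrix (Fin p) (Fin m) ℝ}

theorem iInf_homExtQuad2_eq_of_isFiberMin {x : Fin n → ℝ} {u : Fin m → ℝ}
    (h : IsFiberMin (quadForm2Map Pxx Pxu Puu) (homConstraint Fx Fu) (x, u)) :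
    ⨅ u', homExtQuad2 Pxx Pxu Puu Fx Fu x u' = quadForm2 Pxx Pxu Puu x u := by
  obtain ⟨hu, hmin⟩ := h
  simp only [mem_homConstraint, quadForm2Map_apply] at hu hmin
  refine le_antisymm (iInf_le_of_le u (by simp [homExtQuad2, hu])) (le_iInf fun u' => ?_)
  unfold homExtQuad2
  split_ifs with hu'
  · exact EReal.coe_le_coe_iff.2 (hmin u' hu')
  · exact le_top

theorem iInf_homExtQuad2_eq_top {x : Fin n → ℝ} (hx : ¬∃ u, Fx *ᵥ x + Fu *ᵥ u = 0) :
    ⨅ u, homExtQuad2 Pxx Pxu Puu Fx Fu x u = ⊤ :=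
  iInf_eq_top.2 fun u => if_neg fun hu => hx ⟨u, hu⟩

end HomogeneousQuadratic

theorem homogeneous_partial_minimization_general {n m p : ℕ}
    (Pxx : Matrix (Fin n) (Fin n) ℝ)
    (Pxu : Matrix (Fin n) (Fin m) ℝ)
    (Puu : Matrix (Fin m) (Fin m) ℝ)
    (Fx : Matrix (Fin p) (Fin n) ℝ) (Fu : Matrix (Fin p) (Fin m) ℝ)
    (hattain : ∀ x, (∃ u, Fx.mulVec x + Fu.mulVec u = 0) →
      ∃ u, Fx.mulVec x + Fu.mulVec u = 0 ∧
        ∀ u', Fx.mulVec x + Fu.mulVec u' = 0 →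
          quadForm2 Pxx Pxu Puu x u ≤ quadForm2 Pxx Pxu Puu x u') :
    ∃ (Ph : Matrix (Fin n) (Fin n) ℝ) (ph : ℕ) (Fh : Matrix (Fin ph) (Fin n) ℝ)
      (K : Matrix (Fin m) (Fin n) ℝ),
      Ph.IsSymm ∧
      (∀ x, (⨅ u, homExtQuad2 Pxx Pxu Puu Fx Fu x u) =
        if Fh.mulVec x = 0 then (((1 / 2) * (x ⬝ᵥ Ph.mulVec x) : ℝ) : EReal) else ⊤) ∧
      (∀ x, Fh.mulVec x = 0 →
        Fx.mulVec x + Fu.mulVec (K.mulVec x) = 0 ∧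
        homExtQuad2 Pxx Pxu Puu Fx Fu x (K.mulVec x) =
          ⨅ u, homExtQuad2 Pxx Pxu Puu Fx Fu x u) := by
  obtain ⟨k, hk⟩ := exists_linearMap_isFiberMin (Q := quadForm2Map Pxx Pxu Puu)
    (V := homConstraint Fx Fu) (by simpa [IsFiberMin] using hattain)
  obtain ⟨Fh, hFh⟩ :=
    ((homConstraint Fx Fu).map (LinearMap.fst ℝ _ _)).exists_matrix_mulVec_eq_zero_iff
  replace hFh : ∀ x, Fh *ᵥ x = 0 ↔ ∃ u, Fx *ᵥ x + Fu *ᵥ u = 0 := by simpa using hFh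
  set Qk : QuadraticForm ℝ (Fin n → ℝ) := (quadForm2Map Pxx Pxu Puu).comp (LinearMap.id.prod k)
  have hvalue : ∀ x,
      quadForm2 Pxx Pxu Puu x (k x) = 1 / 2 * (x ⬝ᵥ ((2 : ℝ) • Qk.toMatrix') *ᵥ x) := by
    intro x
    rw [smul_mulVec, dotProduct_smul, QuadraticForm.dotProduct_toMatrix'_mulVec]
    simp [Qk]
  refine ⟨(2 : ℝ) • Qk.toMatrix', n, Fh, LinearMap.toMatrix' k, Qk.isSymm_toMatrix'.smul 2,
    fun x => ?_, fun x hx => ?_⟩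
  · split_ifs with hx
    · rw [iInf_homExtQuad2_eq_of_isFiberMin (hk x ((hFh x).1 hx)), hvalue]
    · exact iInf_homExtQuad2_eq_top fun hfeas => hx ((hFh x).2 hfeas)
  · have hmin := hk x ((hFh x).1 hx)
    rw [LinearMap.toMatrix'_mulVec, iInf_homExtQuad2_eq_of_isFiberMin hmin]
    have hfeas : Fx *ᵥ x + Fu *ᵥ k x = 0 := by simpa using hmin.1
    exact ⟨hfeas, by simp [homExtQuad2, hfeas]⟩

/-- partial minimization over `u` of a convex quadratic form with homogeneous
equality constraints, with the infimum attained for every feasible `x`, yields a quadratic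
form with homogeneous constraints `g(x) = (1/2)xᵀP̂x + I(F̂x = 0)`, and there is a `K` such
that `u = Kx` attains the infimum for every `x` in the domain of `g`. -/
theorem homogeneous_partial_minimization {n m p : ℕ}
    (Pxx : Matrix (Fin n) (Fin n) ℝ) (hPxx : Pxx.IsSymm)
    (Pxu : Matrix (Fin n) (Fin m) ℝ)
    (Puu : Matrix (Fin m) (Fin m) ℝ) (hPuu : Puu.IsSymm)
    (Fx : Matrix (Fin p) (Fin n) ℝ) (Fu : Matrix (Fin p) (Fin m) ℝ)
    (hconv : ConvexOn ℝ {pr : (Fin n → ℝ) × (Fin m → ℝ) |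
        Fx.mulVec pr.1 + Fu.mulVec pr.2 = 0}
      (fun pr => quadForm2 Pxx Pxu Puu pr.1 pr.2))
    (hattain : ∀ x, (∃ u, Fx.mulVec x + Fu.mulVec u = 0) →
      ∃ u, Fx.mulVec x + Fu.mulVec u = 0 ∧
        ∀ u', Fx.mulVec x + Fu.mulVec u' = 0 →
          quadForm2 Pxx Pxu Puu x u ≤ quadForm2 Pxx Pxu Puu x u') :
    ∃ (Ph : Matrix (Fin n) (Fin n) ℝ) (ph : ℕ) (Fh : Matrix (Fin ph) (Fin n) ℝ)
      (K : Matrix (Fin m) (Fin n) ℝ),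
      Ph.IsSymm ∧
      (∀ x, (⨅ u, homExtQuad2 Pxx Pxu Puu Fx Fu x u) =
        if Fh.mulVec x = 0 then (((1 / 2) * (x ⬝ᵥ Ph.mulVec x) : ℝ) : EReal) else ⊤) ∧
      (∀ x, Fh.mulVec x = 0 →
        Fx.mulVec x + Fu.mulVec (K.mulVec x) = 0 ∧
        homExtQuad2 Pxx Pxu Puu Fx Fu x (K.mulVec x) =
          ⨅ u, homExtQuad2 Pxx Pxu Puu Fx Fu x u) :=
  homogeneous_partial_minimization_general Pxx Pxu Puu Fx Fu hattain
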